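/- Let m = ⌊q/2⌋ (if q = 2m+1, the canonical basis contains an extra vector e₀ with h(e₀) = 0). For every integer p with 1 ≤ p ≤ q−1 and every p-form ω on V, ⟨B_{R_ext}^{[p]} ω, ω⟩ ≥ −p(q−p) b_m² |ω|². -/

import Mathlib

open scoped BigOperators

namespace Paper

noncomputable section

/-- Coefficients of exterior forms w.r.t. the fixed orthonormal basis `e₁,…,e_q` of `V = ℝ^q`:
a form is identified with its family of coefficients indexed by subsets of `Fin q`. -/
abbrev Ext (q : ℕ) := Finset (Fin q) → ℝ

variable {q : ℕ}

/-- `(-1)^{#{j ∈ s | j < i}}` -/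
def sgn (i : Fin q) (s : Finset (Fin q)) : ℝ := (-1 : ℝ) ^ (s.filter fun j => j < i).card

/-- Exterior multiplication by the basis vector `e_i`. -/
def wB (i : Fin q) (ω : Ext q) : Ext q := fun s =>
  if i ∈ s then sgn i (s.erase i) * ω (s.erase i) else 0

/-- Interior product (contraction) with the basis vector `e_i`. -/
def iB (i : Fin q) (ω : Ext q) : Ext q := fun s =>
  if i ∈ s then 0 else sgn i s * ω (insert i s)

/-- The basis monomial `e_{i₁} ∧ ⋯ ∧ e_{i_p}`, for `s = {i₁ < ⋯ < i_p}`. -/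
def bF (s : Finset (Fin q)) : Ext q := fun t => if t = s then 1 else 0

/-- The basis vector `e_i` of `V = ℝ^q`. -/
def eB (i : Fin q) : Fin q → ℝ := Pi.single i 1

/-- Exterior multiplication by the vector `X ∈ V`. -/
def wV (X : Fin q → ℝ) (ω : Ext q) : Ext q := ∑ i, X i • wB i ω

/-- Interior product with the vector `X ∈ V`. -/
def iV (X : Fin q → ℝ) (ω : Ext q) : Ext q := ∑ i, X i • iB i ω

/-- Clifford multiplication `X · ω = X ∧ ω − X ⌟ ω` of a vector with a form. -/
def clV (X : Fin q → ℝ) (ω : Ext q) : Ext q := wV X ω - iV X ω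

/-- Clifford multiplication `e_{i₁} · e_{i₂} ⋯ e_{i_p} · ω` for `s = {i₁ < ⋯ < i_p}`. -/
def clB (s : Finset (Fin q)) (ω : Ext q) : Ext q :=
  (Finset.sort s (· ≤ ·)).foldr (fun i τ => clV (eB i) τ) ω

/-- Clifford multiplication of two forms. -/
def clM (ω₁ ω₂ : Ext q) : Ext q := ∑ s : Finset (Fin q), ω₁ s • clB s ω₂

/-- The bracket `[ω₁, ω₂] = ω₁ · ω₂ − ω₂ · ω₁`. -/
def brkt (ω₁ ω₂ : Ext q) : Ext q := clM ω₁ ω₂ - clM ω₂ ω₁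

/-- Exterior multiplication by the monomial `e_{i₁} ∧ ⋯ ∧ e_{i_p}`. -/
def wBs (s : Finset (Fin q)) (ω : Ext q) : Ext q :=
  (Finset.sort s (· ≤ ·)).foldr (fun i τ => wB i τ) ω

/-- The wedge product of two forms. -/
def wM (ω₁ ω₂ : Ext q) : Ext q := ∑ s : Finset (Fin q), ω₁ s • wBs s ω₂

/-- The inner product on forms, for which the basis monomials are orthonormal. -/
def ip (ω φ : Ext q) : ℝ := ∑ s : Finset (Fin q), ω s * φ s

/-- `ω` is a form of (pure) degree `p`. -/
def homog (p : ℕ) (ω : Ext q) : Prop := ∀ s : Finset (Fin q), s.card ≠ p → ω s = 0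

/-- The inner product of two vectors of `V = ℝ^q`. -/
def dotP (X Y : Fin q → ℝ) : ℝ := ∑ i, X i * Y i

/-- A vector of `V` regarded as a 1-form. -/
def oneF (X : Fin q → ℝ) : Ext q := ∑ i, X i • bF {i}

/-- The wedge `X ∧ Y` of two vectors. -/
def w2 (X Y : Fin q → ℝ) : Ext q := wV X (oneF Y)

/-- Two-element subsets, indexing the canonical orthonormal basis of `Λ²V`. -/
def twoSets (q : ℕ) : Finset (Finset (Fin q)) := Finset.univ.filter fun s => s.card = 2

/-- The Bochner operator quadratic form `⟨B_R^{[p]} ω, φ⟩ =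
(1/4) Σ_{r,s} ⟨R ψ_r, ψ_s⟩ ⟨[ψ_r,ω],[ψ_s,φ]⟩`, computed in the canonical
orthonormal basis `{e_i ∧ e_j}_{i<j}` of `Λ²V`. -/
def Bform (R : Ext q →ₗ[ℝ] Ext q) (ω φ : Ext q) : ℝ :=
  (1 / 4 : ℝ) * ∑ s ∈ twoSets q, ∑ t ∈ twoSets q,
    ip (R (bF s)) (bF t) * ip (brkt (bF s) ω) (brkt (bF t) φ)


/-!
In the basis `ψ_x = e_i ∧ e_j` (`x = (i, j)`, `i < j`) the curvature splits as
`⟨R_ext ψ_x, ψ_y⟩ = 2 Ω_x Ω_y + ⟨Λ²h ψ_x, ψ_y⟩` with `Ω_x = ⟨h e_i, e_j⟩`, by skew-symmetry of `h`.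
The first part contributes a Gram sum of squares, hence is nonnegative. For `h` in canonical
form, `Λ²h` has one nonzero entry per row, at an involution of the pairs, of size at most `b_m²`;
with `2 |⟨u, v⟩| ≤ |u|² + |v|²` the second part is at least `-b_m² Σ_x |[ψ_x, ω]|²`.
Finally `[ψ_x, e_S] = 0` when `|x ∩ S|` is even, since Clifford monomials then commute, and has
norm at most `2` otherwise; a `p`-set `S` meets at most `p (q - p)` pairs oddly, so
`Σ_x |[ψ_x, ω]|² ≤ 4 p (q - p) |ω|²`.
-/

open Finset

section Sign

lemma sgn_mul_self (i : Fin q) (s : Finset (Fin q)) : sgn i s * sgn i s = 1 := by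
  rw [sgn, ← pow_add]
  exact Even.neg_one_pow ⟨_, rfl⟩

lemma abs_sgn (i : Fin q) (s : Finset (Fin q)) : |sgn i s| = 1 := by
  rw [sgn, abs_pow, abs_neg, abs_one, one_pow]

variable {a b : Fin q} {s : Finset (Fin q)}

lemma sgn_erase_of_le (hab : a ≤ b) : sgn a (s.erase b) = sgn a s := by
  rw [sgn, sgn, filter_erase, erase_eq_of_notMem]
  simp [hab]

lemma sgn_insert_of_le (hab : a ≤ b) : sgn a (insert b s) = sgn a s := by
  rw [sgn, sgn, filter_insert, if_neg (not_lt.2 hab)]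

lemma sgn_erase_of_gt (hab : b < a) (hb : b ∈ s) : sgn a (s.erase b) = -sgn a s := by
  have hb' : b ∈ s.filter (· < a) := mem_filter.2 ⟨hb, hab⟩
  rw [sgn, sgn, filter_erase, ← card_erase_add_one hb', pow_succ]
  ring

lemma sgn_insert_of_gt (hab : b < a) (hb : b ∉ s) : sgn a (insert b s) = -sgn a s := by
  have hb' : b ∉ s.filter (· < a) := fun h => hb (mem_filter.1 h).1
  rw [sgn, sgn, filter_insert, if_pos hab, card_insert_of_notMem hb', pow_succ]
  ring

end Sign

section CliffordGenerator

lemma clV_eB_apply (a : Fin q) (φ : Ext q) (s : Finset (Fin q)) :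
    clV (eB a) φ s =
      if a ∈ s then sgn a s * φ (s.erase a) else -(sgn a s * φ (insert a s)) := by
  have hw : wV (eB a) φ = wB a φ := by simp [wV, eB, Pi.single_apply]
  have hi : iV (eB a) φ = iB a φ := by simp [iV, eB, Pi.single_apply]
  simp only [clV, hw, hi, Pi.sub_apply, wB, iB]
  split_ifs with ha
  · rw [sgn_erase_of_le le_rfl, sub_zero]
  · rw [zero_sub]

lemma clV_eB_add (a : Fin q) (φ ψ : Ext q) :
    clV (eB a) (φ + ψ) = clV (eB a) φ + clV (eB a) ψ := by
  funext s
  simp only [Pi.add_apply, clV_eB_apply]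
  split_ifs <;> ring

lemma clV_eB_smul (a : Fin q) (c : ℝ) (φ : Ext q) :
    clV (eB a) (c • φ) = c • clV (eB a) φ := by
  funext s
  simp only [Pi.smul_apply, smul_eq_mul, clV_eB_apply]
  split_ifs <;> ring

lemma clV_eB_clV_eB_self (a : Fin q) (φ : Ext q) : clV (eB a) (clV (eB a) φ) = -φ := by
  funext s
  have hsgn := sgn_mul_self a s
  by_cases ha : a ∈ s
  · simp only [clV_eB_apply, ha, if_true, notMem_erase, if_false, insert_erase ha,
      sgn_erase_of_le le_rfl, Pi.neg_apply]
    linear_combination (-φ s) * hsgn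
  · simp only [clV_eB_apply, ha, if_false, mem_insert_self, if_true, erase_insert ha,
      sgn_insert_of_le le_rfl, Pi.neg_apply]
    linear_combination (-φ s) * hsgn

lemma clV_eB_anticomm_of_lt {a b : Fin q} (hab : a < b) (φ : Ext q) :
    clV (eB a) (clV (eB b) φ) = -clV (eB b) (clV (eB a) φ) := by
  funext s
  have hne := hab.ne
  by_cases ha : a ∈ s <;> by_cases hb : b ∈ s <;>
    simp [clV_eB_apply, ha, hb, hne, hne.symm, sgn_erase_of_le hab.le, sgn_insert_of_le hab.le,
      sgn_erase_of_gt hab, sgn_insert_of_gt hab, erase_right_comm, erase_insert_of_ne,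
      insert_comm a b, mem_erase, mem_insert] <;> ring

lemma clV_eB_anticomm {a b : Fin q} (hab : a ≠ b) (φ : Ext q) :
    clV (eB a) (clV (eB b) φ) = -clV (eB b) (clV (eB a) φ) := by
  rcases hab.lt_or_gt with h | h
  · exact clV_eB_anticomm_of_lt h φ
  · rw [clV_eB_anticomm_of_lt h, neg_neg]

end CliffordGenerator

section CliffordMonomial

def clList (l : List (Fin q)) (φ : Ext q) : Ext q := l.foldr (fun i τ => clV (eB i) τ) φ

@[simp] lemma clList_nil (φ : Ext q) : clList [] φ = φ := rfl

@[simp] lemma clList_cons (a : Fin q) (l : List (Fin q)) (φ : Ext q) :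
    clList (a :: l) φ = clV (eB a) (clList l φ) := rfl

lemma clB_eq_clList (s : Finset (Fin q)) (φ : Ext q) :
    clB s φ = clList (s.sort (· ≤ ·)) φ := rfl

lemma clList_add (l : List (Fin q)) (φ ψ : Ext q) :
    clList l (φ + ψ) = clList l φ + clList l ψ := by
  induction l with
  | nil => rfl
  | cons a l ih => rw [clList_cons, ih, clV_eB_add]; rfl

lemma clList_smul (l : List (Fin q)) (c : ℝ) (φ : Ext q) :
    clList l (c • φ) = c • clList l φ := by
  induction l with
  | nil => rfl
  | cons a l ih => rw [clList_cons, ih, clV_eB_smul]; rfl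

lemma clList_sum {ι : Type*} (l : List (Fin q)) (A : Finset ι) (F : ι → Ext q) :
    clList l (∑ i ∈ A, F i) = ∑ i ∈ A, clList l (F i) :=
  map_sum (AddMonoidHom.mk' (clList l) (clList_add l)) F A

lemma clV_eB_clList (a : Fin q) {l : List (Fin q)} (hl : l.Nodup) (φ : Ext q) :
    clV (eB a) (clList l φ) =
      ((if a ∈ l then -1 else 1) * (-1) ^ l.length : ℝ) • clList l (clV (eB a) φ) := by
  induction l with
  | nil => simp
  | cons b l ih =>
    obtain ⟨hbl, hl⟩ := List.nodup_cons.1 hl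
    have ih := ih hl
    rw [clList_cons, clList_cons]
    by_cases hab : a = b
    · subst hab
      rw [if_neg hbl, one_mul] at ih
      have key : ((-1) ^ l.length : ℝ) • clV (eB a) (clList l (clV (eB a) φ)) = -clList l φ := by
        rw [← clV_eB_smul, ← ih, clV_eB_clV_eB_self]
      rw [clV_eB_clV_eB_self, ← key, if_pos List.mem_cons_self, List.length_cons, pow_succ]
      congr 1
      ring
    · rw [clV_eB_anticomm hab, ih, clV_eB_smul, ← neg_one_smul ℝ, smul_smul,
        List.length_cons, pow_succ]
      simp only [List.mem_cons, hab, false_or]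
      congr 1
      ring

lemma clList_clList {l₁ l₂ : List (Fin q)} (h₁ : l₁.Nodup) (h₂ : l₂.Nodup) (φ : Ext q) :
    clList l₁ (clList l₂ φ) =
      ((-1) ^ (l₁.length * l₂.length) * (-1) ^ (l₁.toFinset ∩ l₂.toFinset).card : ℝ) •
        clList l₂ (clList l₁ φ) := by
  induction l₁ with
  | nil => simp
  | cons a l ih =>
    obtain ⟨hal, hl⟩ := List.nodup_cons.1 h₁
    rw [clList_cons, ih hl, clV_eB_smul, clV_eB_clList a h₂, ← clList_cons, smul_smul]
    have hal' : a ∉ l.toFinset ∩ l₂.toFinset := fun h => hal (List.mem_toFinset.1 (mem_inter.1 h).1)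
    congr 1
    by_cases ha₂ : a ∈ l₂
    · rw [List.toFinset_cons, insert_inter_of_mem (List.mem_toFinset.2 ha₂),
        card_insert_of_notMem hal', if_pos ha₂]
      simp only [List.length_cons]
      ring
    · rw [List.toFinset_cons, insert_inter_of_notMem (fun h => ha₂ (List.mem_toFinset.1 h)),
        if_neg ha₂]
      simp only [List.length_cons]
      ring

lemma clB_comm {r s : Finset (Fin q)} (hr : r.card = 2) (heven : Even (r ∩ s).card)
    (φ : Ext q) : clB r (clB s φ) = clB s (clB r φ) := by
  simp only [clB_eq_clList]
  rw [clList_clList (sort_nodup r _) (sort_nodup s _), sort_toFinset, sort_toFinset,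
    length_sort, length_sort, hr, pow_mul, heven.neg_one_pow]
  norm_num

end CliffordMonomial

section BasisAction

lemma symmDiff_singleton_of_mem {a : Fin q} {t : Finset (Fin q)} (ha : a ∈ t) :
    symmDiff t {a} = t.erase a := by
  ext x
  by_cases hx : x = a <;> simp [mem_symmDiff, hx, ha]

lemma symmDiff_singleton_of_notMem {a : Fin q} {t : Finset (Fin q)} (ha : a ∉ t) :
    symmDiff t {a} = insert a t := by
  ext x
  by_cases hx : x = a <;> simp [mem_symmDiff, hx, ha]

lemma clV_eB_bF (a : Fin q) (t : Finset (Fin q)) :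
    clV (eB a) (bF t) = ((if a ∈ t then -1 else 1) * sgn a t : ℝ) • bF (symmDiff t {a}) := by
  funext s
  simp only [Pi.smul_apply, smul_eq_mul, clV_eB_apply, bF]
  by_cases ha : a ∈ t
  · rw [symmDiff_singleton_of_mem ha]
    by_cases hs : a ∈ s
    · have h₁ : s.erase a ≠ t := fun h => notMem_erase a s (h ▸ ha)
      have h₂ : s ≠ t.erase a := fun h => notMem_erase a t (h ▸ hs)
      simp [hs, h₁, h₂]
    · by_cases he : s = t.erase a
      · subst he
        simp [ha, insert_erase ha, sgn_erase_of_le le_rfl]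
      · have h₁ : insert a s ≠ t := fun h => he (by rw [← h, erase_insert hs])
        simp [hs, h₁, he]
  · rw [symmDiff_singleton_of_notMem ha]
    by_cases hs : a ∈ s
    · by_cases he : s = insert a t
      · subst he
        simp [ha, erase_insert ha, sgn_insert_of_le le_rfl]
      · have h₁ : s.erase a ≠ t := fun h => he (by rw [← h, insert_erase hs])
        simp [hs, h₁, he]
    · have h₁ : insert a s ≠ t := fun h => ha (h ▸ mem_insert_self a s)
      have h₂ : s ≠ insert a t := fun h => hs (h ▸ mem_insert_self a t)
      simp [hs, h₁, h₂]

lemma clList_bF {l : List (Fin q)} (hl : l.Nodup) (t : Finset (Fin q)) :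
    ∃ c : ℝ, |c| = 1 ∧ clList l (bF t) = c • bF (symmDiff l.toFinset t) := by
  induction l with
  | nil =>
    refine ⟨1, abs_one, ?_⟩
    rw [List.toFinset_nil, ← bot_eq_empty, bot_symmDiff, clList_nil, one_smul]
  | cons a l ih =>
    obtain ⟨hal, hl⟩ := List.nodup_cons.1 hl
    obtain ⟨c, hc, hcl⟩ := ih hl
    set u := symmDiff l.toFinset t
    refine ⟨((if a ∈ u then -1 else 1) * sgn a u) * c, ?_, ?_⟩
    · rw [abs_mul, abs_mul, abs_sgn, hc]
      split_ifs <;> norm_num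
    · have hins : insert a l.toFinset = symmDiff l.toFinset {a} :=
        (symmDiff_singleton_of_notMem (mt List.mem_toFinset.1 hal)).symm
      rw [clList_cons, hcl, clV_eB_smul, clV_eB_bF, smul_smul, mul_comm c, List.toFinset_cons,
        hins, symmDiff_right_comm]

lemma clB_bF (s t : Finset (Fin q)) :
    ∃ c : ℝ, |c| = 1 ∧ clB s (bF t) = c • bF (symmDiff s t) := by
  simpa only [clB_eq_clList, sort_toFinset] using clList_bF (sort_nodup s (· ≤ ·)) t

lemma clList_bF_of_lt {l : List (Fin q)} (hl : l.Pairwise (· < ·)) {t : Finset (Fin q)}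
    (ht : ∀ a ∈ l, ∀ x ∈ t, a < x) : clList l (bF t) = bF (l.toFinset ∪ t) := by
  induction l with
  | nil => simp
  | cons a l ih =>
    obtain ⟨hal, hl⟩ := List.pairwise_cons.1 hl
    have hlow : ∀ x ∈ l.toFinset ∪ t, a < x := by
      simp only [mem_union, List.mem_toFinset]
      rintro x (hx | hx)
      exacts [hal x hx, ht a List.mem_cons_self x hx]
    have ha : a ∉ l.toFinset ∪ t := fun h => lt_irrefl a (hlow a h)
    have hsgn : sgn a (l.toFinset ∪ t) = 1 := by
      rw [sgn, filter_false_of_mem fun x hx => not_lt.2 (hlow x hx).le, card_empty, pow_zero]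
    rw [clList_cons, ih hl fun b hb => ht b (List.mem_cons_of_mem a hb), clV_eB_bF, if_neg ha,
      hsgn, one_mul, one_smul, symmDiff_singleton_of_notMem ha, List.toFinset_cons, insert_union]

lemma clB_bF_empty (s : Finset (Fin q)) : clB s (bF ∅) = bF s := by
  rw [clB_eq_clList, clList_bF_of_lt (sortedLT_sort s).pairwise (by simp), sort_toFinset,
    union_empty]

end BasisAction

section Bracket

/-- `[e_r, e_S]` is a multiple of the single monomial `e_{S ∆ r}`. -/
def brktCoeff (r S : Finset (Fin q)) : ℝ := (clB r (bF S) - clB S (bF r)) (symmDiff S r)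

lemma clB_bF_sub_clB_bF (r S : Finset (Fin q)) :
    clB r (bF S) - clB S (bF r) = brktCoeff r S • bF (symmDiff S r) ∧ |brktCoeff r S| ≤ 2 := by
  obtain ⟨c₁, hc₁, h₁⟩ := clB_bF r S
  obtain ⟨c₂, hc₂, h₂⟩ := clB_bF S r
  have hsub : clB r (bF S) - clB S (bF r) = (c₁ - c₂) • bF (symmDiff S r) := by
    rw [h₁, h₂, symmDiff_comm r S, sub_smul]
  have hcoeff : brktCoeff r S = c₁ - c₂ := by
    rw [brktCoeff, hsub]
    simp [bF]
  refine ⟨by rw [hsub, hcoeff], ?_⟩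
  rw [hcoeff]
  linarith [abs_sub c₁ c₂]

lemma brktCoeff_eq_zero {r S : Finset (Fin q)} (hr : r.card = 2) (heven : Even (r ∩ S).card) :
    brktCoeff r S = 0 := by
  rw [brktCoeff, ← clB_bF_empty S, ← clB_bF_empty r, clB_comm hr heven, sub_self, Pi.zero_apply]

lemma sum_smul_bF (ω : Ext q) : ∑ S, ω S • bF S = ω := by
  funext t
  simp [bF]

lemma clM_bF (r : Finset (Fin q)) (ω : Ext q) : clM (bF r) ω = clB r ω := by
  simp [clM, bF]

lemma brkt_bF_apply (r : Finset (Fin q)) (ω : Ext q) (t : Finset (Fin q)) :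
    brkt (bF r) ω t = brktCoeff r (symmDiff t r) * ω (symmDiff t r) := by
  have hexp : brkt (bF r) ω = ∑ S, (ω S * brktCoeff r S) • bF (symmDiff S r) := by
    have hlin : clB r ω = ∑ S, ω S • clB r (bF S) := by
      conv_lhs => rw [← sum_smul_bF ω]
      simp only [clB_eq_clList, clList_sum, clList_smul]
    rw [brkt, clM_bF, clM, hlin, ← sum_sub_distrib]
    refine sum_congr rfl fun S _ => ?_
    rw [← smul_sub, (clB_bF_sub_clB_bF r S).1, smul_smul]
  rw [hexp, Finset.sum_apply, sum_eq_single (symmDiff t r)]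
  · simp [bF, mul_comm]
  · intro S _ hS
    have : t ≠ symmDiff S r := fun h => hS (by rw [h, symmDiff_symmDiff_cancel_right])
    simp [bF, this]
  · simp

lemma ip_brkt_bF_self_le {r : Finset (Fin q)} (hr : r.card = 2) (ω : Ext q) :
    ip (brkt (bF r) ω) (brkt (bF r) ω) ≤
      ∑ S, if Odd (r ∩ S).card then 4 * ω S ^ 2 else 0 := by
  have hreindex : ip (brkt (bF r) ω) (brkt (bF r) ω) = ∑ S, (brktCoeff r S * ω S) ^ 2 := by
    simp only [ip, brkt_bF_apply, ← sq]
    exact Fintype.sum_bijective (symmDiff · r)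
      (Function.Involutive.bijective fun t => symmDiff_symmDiff_cancel_right r t) _ _ fun _ => rfl
  rw [hreindex]
  refine sum_le_sum fun S _ => ?_
  split_ifs with hodd
  · have hsq : brktCoeff r S ^ 2 ≤ 2 ^ 2 :=
      sq_le_sq.2 ((clB_bF_sub_clB_bF r S).2.trans (le_abs_self 2))
    nlinarith [sq_nonneg (ω S)]
  · rw [brktCoeff_eq_zero hr (Nat.not_odd_iff_even.1 hodd)]
    norm_num

end Bracket

section Counting

lemma mem_twoSets {r : Finset (Fin q)} : r ∈ twoSets q ↔ r.card = 2 := by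
  simp [twoSets]

lemma filter_odd_inter_subset (S : Finset (Fin q)) :
    (twoSets q).filter (fun r => Odd (r ∩ S).card) ⊆
      (S ×ˢ Sᶜ).image fun x => ({x.1, x.2} : Finset (Fin q)) := by
  intro r hr
  obtain ⟨hr2, hodd⟩ := mem_filter.1 hr
  have hin : (r ∩ S).card = 1 := by
    have := card_le_card (inter_subset_left (s₁ := r) (s₂ := S))
    rw [mem_twoSets] at hr2
    obtain ⟨k, hk⟩ := hodd
    omega
  have hout : (r \ S).card = 1 := by
    have := card_sdiff_add_card_inter r S
    rw [mem_twoSets.1 hr2] at this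
    omega
  obtain ⟨a, ha⟩ := card_eq_one.1 hin
  obtain ⟨c, hc⟩ := card_eq_one.1 hout
  have haS : a ∈ S := (mem_inter.1 (ha ▸ mem_singleton_self a)).2
  have hcS : c ∉ S := (mem_sdiff.1 (hc ▸ mem_singleton_self c)).2
  refine mem_image.2 ⟨(a, c), mem_product.2 ⟨haS, mem_compl.2 hcS⟩, ?_⟩
  rw [← sdiff_union_inter r S, hc, ha, union_comm]
  rfl

lemma card_filter_odd_inter_le (S : Finset (Fin q)) :
    ((twoSets q).filter (fun r => Odd (r ∩ S).card)).card ≤ S.card * (q - S.card) := by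
  calc _ ≤ ((S ×ˢ Sᶜ).image fun x => ({x.1, x.2} : Finset (Fin q))).card :=
        card_le_card (filter_odd_inter_subset S)
    _ ≤ (S ×ˢ Sᶜ).card := card_image_le
    _ = S.card * (q - S.card) := by rw [card_product, card_compl, Fintype.card_fin]

lemma sum_twoSets_ip_brkt_le {p : ℕ} {ω : Ext q} (hω : homog p ω) :
    ∑ r ∈ twoSets q, ip (brkt (bF r) ω) (brkt (bF r) ω) ≤
      4 * ((p : ℝ) * ((q : ℝ) - p)) * ip ω ω := by
  calc _ ≤ ∑ r ∈ twoSets q, ∑ S, if Odd (r ∩ S).card then 4 * ω S ^ 2 else 0 :=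
        sum_le_sum fun r hr => ip_brkt_bF_self_le (mem_twoSets.1 hr) ω
    _ = ∑ S, ((twoSets q).filter (fun r => Odd (r ∩ S).card)).card * (4 * ω S ^ 2) := by
        rw [sum_comm]
        simp only [← sum_filter, sum_const, nsmul_eq_mul]
    _ ≤ ∑ S, (p : ℝ) * ((q : ℝ) - p) * (4 * ω S ^ 2) := by
        refine sum_le_sum fun S _ => ?_
        by_cases hS : ω S = 0
        · simp [hS]
        have hSp : S.card = p := by_contra fun h => hS (hω S h)
        have hpq : p ≤ q := hSp ▸ (card_le_univ S).trans (Fintype.card_fin q).le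
        have hcount : (((twoSets q).filter (fun r => Odd (r ∩ S).card)).card : ℝ) ≤
            (p : ℝ) * ((q : ℝ) - p) := by
          rw [← Nat.cast_sub hpq, ← Nat.cast_mul, ← hSp]
          exact_mod_cast card_filter_odd_inter_le S
        exact mul_le_mul_of_nonneg_right hcount (by positivity)
    _ = 4 * ((p : ℝ) * ((q : ℝ) - p)) * ip ω ω := by
        rw [ip, mul_sum]
        exact sum_congr rfl fun S _ => by ring

end Counting

section Gram

lemma ip_self_nonneg (f : Ext q) : 0 ≤ ip f f :=
  sum_nonneg fun s _ => mul_self_nonneg (f s)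

lemma abs_ip_le (f g : Ext q) : |ip f g| ≤ (ip f f + ip g g) / 2 := by
  have hsub : 0 ≤ ip (f - g) (f - g) := ip_self_nonneg _
  have hadd : 0 ≤ ip (f + g) (f + g) := ip_self_nonneg _
  have hsub' : ip (f - g) (f - g) = ip f f - 2 * ip f g + ip g g := by
    simp only [ip, Pi.sub_apply, mul_sum, ← sum_sub_distrib, ← sum_add_distrib]
    exact sum_congr rfl fun s _ => by ring
  have hadd' : ip (f + g) (f + g) = ip f f + 2 * ip f g + ip g g := by
    simp only [ip, Pi.add_apply, mul_sum, ← sum_add_distrib]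
    exact sum_congr rfl fun s _ => by ring
  rw [abs_le]
  constructor <;> linarith

variable {ι : Type*} (A : Finset ι) (u : ι → Ext q)

lemma sum_sum_mul_mul_ip_nonneg (c : ι → ℝ) :
    0 ≤ ∑ x ∈ A, ∑ y ∈ A, c x * c y * ip (u x) (u y) := by
  have hsq : ∑ x ∈ A, ∑ y ∈ A, c x * c y * ip (u x) (u y) =
      ∑ t : Finset (Fin q), (∑ x ∈ A, c x * u x t) ^ 2 := by
    simp_rw [sq, sum_mul_sum, ip, mul_sum]
    symm
    rw [sum_comm]
    refine sum_congr rfl fun x _ => ?_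
    rw [sum_comm]
    exact sum_congr rfl fun y _ => sum_congr rfl fun t _ => by ring
  rw [hsq]
  exact sum_nonneg fun t _ => sq_nonneg _

lemma neg_mul_sum_ip_le_of_involution (σ : ι → ι) (hσA : ∀ x ∈ A, σ x ∈ A)
    (hσσ : ∀ x ∈ A, σ (σ x) = x) (L : ι → ι → ℝ) (B : ℝ)
    (hL : ∀ x ∈ A, ∀ y ∈ A, y ≠ σ x → L x y = 0) (hLB : ∀ x ∈ A, |L x (σ x)| ≤ B) :
    -(B * ∑ x ∈ A, ip (u x) (u x)) ≤ ∑ x ∈ A, ∑ y ∈ A, L x y * ip (u x) (u y) := by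
  have hrow : ∀ x ∈ A, ∑ y ∈ A, L x y * ip (u x) (u y) = L x (σ x) * ip (u x) (u (σ x)) :=
    fun x hx => sum_eq_single_of_mem _ (hσA x hx) fun y hy hne => by rw [hL x hx y hy hne, zero_mul]
  have hterm : ∀ x ∈ A, -(B * ((ip (u x) (u x) + ip (u (σ x)) (u (σ x))) / 2)) ≤
      L x (σ x) * ip (u x) (u (σ x)) := by
    intro x hx
    have hB : 0 ≤ B := (abs_nonneg _).trans (hLB x hx)
    calc _ ≤ -(|L x (σ x)| * |ip (u x) (u (σ x))|) :=
          neg_le_neg (mul_le_mul (hLB x hx) (abs_ip_le _ _) (abs_nonneg _) hB)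
      _ ≤ _ := by rw [← abs_mul]; exact neg_abs_le _
  have hperm : ∑ x ∈ A, ip (u (σ x)) (u (σ x)) = ∑ x ∈ A, ip (u x) (u x) :=
    sum_nbij' σ σ hσA hσA hσσ hσσ fun _ _ => rfl
  calc -(B * ∑ x ∈ A, ip (u x) (u x))
      = ∑ x ∈ A, -(B * ((ip (u x) (u x) + ip (u (σ x)) (u (σ x))) / 2)) := by
        rw [sum_neg_distrib, ← mul_sum, ← sum_div, sum_add_distrib, hperm]
        ring
    _ ≤ ∑ x ∈ A, L x (σ x) * ip (u x) (u (σ x)) := sum_le_sum hterm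
    _ = _ := (sum_congr rfl hrow).symm

end Gram

section Pairs

def ltPairs (q : ℕ) : Finset (Fin q × Fin q) := univ.filter fun x => x.1 < x.2

lemma mem_ltPairs {x : Fin q × Fin q} : x ∈ ltPairs q ↔ x.1 < x.2 := by
  simp [ltPairs]

lemma sum_twoSets_eq_sum_ltPairs {M : Type*} [AddCommMonoid M] (F : Finset (Fin q) → M) :
    ∑ r ∈ twoSets q, F r = ∑ x ∈ ltPairs q, F {x.1, x.2} := by
  refine (sum_bij (fun x _ => {x.1, x.2}) (fun x hx => ?_) (fun x hx y hy hxy => ?_)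
    (fun r hr => ?_) fun _ _ => rfl).symm
  · exact mem_twoSets.2 (card_pair (mem_ltPairs.1 hx).ne)
  · have hxy' : ({x.1, x.2} : Set (Fin q)) = {y.1, y.2} := by
      simpa using congrArg (fun r : Finset (Fin q) => (r : Set (Fin q))) hxy
    rcases Set.pair_eq_pair_iff.1 hxy' with ⟨h₁, h₂⟩ | ⟨h₁, h₂⟩
    · exact Prod.ext h₁ h₂
    · have := (mem_ltPairs.1 hx).trans_eq h₂
      exact absurd (h₁ ▸ this) (lt_asymm (mem_ltPairs.1 hy))
  · obtain ⟨a, c, hac, rfl⟩ := card_eq_two.1 (mem_twoSets.1 hr)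
    rcases hac.lt_or_gt with h | h
    · exact ⟨(a, c), mem_ltPairs.2 h, rfl⟩
    · exact ⟨(c, a), mem_ltPairs.2 h, pair_comm c a⟩

lemma bF_pair_eq_w2 {a c : Fin q} (hac : a < c) : bF {a, c} = w2 (eB a) (eB c) := by
  have honeF : oneF (eB c) = bF {c} := by simp [oneF, eB, Pi.single_apply]
  have hwV : wV (eB a) (bF {c}) = wB a (bF {c}) := by simp [wV, eB, Pi.single_apply]
  have hsgn : sgn a {c} = 1 := by simp [sgn, filter_singleton, not_lt.2 hac.le]
  have hca : c ≠ a := hac.ne'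
  rw [w2, honeF, hwV]
  funext s
  by_cases hs : a ∈ s
  · have : s.erase a = {c} ↔ s = {a, c} :=
      ⟨fun h => by rw [← insert_erase hs, h], fun h => by simp [h, hca.symm]⟩
    simp only [bF, wB, if_pos hs, this]
    split_ifs with h
    · rw [h, erase_insert (by simpa using hca.symm), hsgn, mul_one]
    · rw [mul_zero]
  · have : s ≠ {a, c} := fun h => hs (h ▸ mem_insert_self a {c})
    simp [bF, wB, hs, this]

end Pairs

section CanonicalForm

/-- The canonical form of `h` pairs `2k` with `2k + 1`; for odd `q` the last index is its own
partner. -/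
def partner (a : Fin q) : Fin q :=
  if a.val % 2 = 0 then (if hlt : a.val + 1 < q then ⟨a.val + 1, hlt⟩ else a)
  else ⟨a.val - 1, by omega⟩

def partnerCoeff (b : Fin (q / 2) → ℝ) (a : Fin q) : ℝ :=
  if he : a.val % 2 = 0 then (if hlt : a.val + 1 < q then b ⟨a.val / 2, by omega⟩ else 0)
  else -b ⟨a.val / 2, by omega⟩

lemma partner_partner (a : Fin q) : partner (partner a) = a := by
  obtain ⟨v, hv⟩ := a
  apply Fin.ext
  by_cases he : v % 2 = 0
  · by_cases hlt : v + 1 < q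
    · simp [partner, he, hlt, Nat.add_mod]
    · simp [partner, he, hlt]
  · have : (v - 1) % 2 = 0 := by omega
    simp [partner, he, this, (by omega : v - 1 + 1 < q)]
    omega

lemma partner_injective : Function.Injective (partner (q := q)) :=
  Function.LeftInverse.injective partner_partner

lemma partnerCoeff_partner (b : Fin (q / 2) → ℝ) (a : Fin q) :
    partnerCoeff b (partner a) = -partnerCoeff b a := by
  obtain ⟨v, hv⟩ := a
  by_cases he : v % 2 = 0
  · by_cases hlt : v + 1 < q
    · have : (v + 1) / 2 = v / 2 := by omega
      simp [partner, partnerCoeff, he, hlt, Nat.add_mod, this]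
    · simp [partner, partnerCoeff, he, hlt]
  · have h₁ : (v - 1) % 2 = 0 := by omega
    have h₂ : (v - 1) / 2 = v / 2 := by omega
    simp [partner, partnerCoeff, he, h₁, h₂, (by omega : v - 1 + 1 < q)]

lemma abs_partnerCoeff_le {b : Fin (q / 2) → ℝ} {M : ℝ} (hM : ∀ k, |b k| ≤ M) (hM0 : 0 ≤ M)
    (a : Fin q) : |partnerCoeff b a| ≤ M := by
  unfold partnerCoeff
  split_ifs
  · exact hM _
  · rwa [abs_zero]
  · rw [abs_neg]; exact hM _

lemma eq_partnerCoeff_smul_of_canonical (hq : 0 < q) {h : (Fin q → ℝ) →ₗ[ℝ] (Fin q → ℝ)}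
    {b : Fin (q / 2) → ℝ}
    (hcan : ∀ k (hk : 2 * k + 1 < q),
      h (eB ⟨2 * k, by omega⟩) = b ⟨k, by omega⟩ • eB ⟨2 * k + 1, hk⟩ ∧
        h (eB ⟨2 * k + 1, hk⟩) = (-b ⟨k, by omega⟩) • eB ⟨2 * k, by omega⟩)
    (hodd : q % 2 = 1 → h (eB ⟨q - 1, by omega⟩) = 0) (a : Fin q) :
    h (eB a) = partnerCoeff b a • eB (partner a) := by
  obtain ⟨v, hv⟩ := a
  by_cases he : v % 2 = 0
  · by_cases hlt : v + 1 < q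
    · have := (hcan (v / 2) (by omega)).1
      simp only [show 2 * (v / 2) = v by omega] at this
      simpa [partner, partnerCoeff, he, hlt] using this
    · have := hodd (by omega)
      simp only [show q - 1 = v by omega] at this
      simp [partner, partnerCoeff, he, hlt, this]
  · have := (hcan (v / 2) (by omega)).2
    simp only [show 2 * (v / 2) = v - 1 by omega, show v - 1 + 1 = v by omega] at this
    simpa [partner, partnerCoeff, he] using this

end CanonicalForm

section Curvature

variable {h : (Fin q → ℝ) →ₗ[ℝ] (Fin q → ℝ)}

def minor2 (h : (Fin q → ℝ) →ₗ[ℝ] (Fin q → ℝ)) (x y : Fin q × Fin q) : ℝ :=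
  dotP (h (eB x.1)) (eB y.1) * dotP (h (eB x.2)) (eB y.2) -
    dotP (h (eB x.1)) (eB y.2) * dotP (h (eB x.2)) (eB y.1)

lemma ip_apply_bF_pair {R : Ext q →ₗ[ℝ] Ext q}
    (hRf : ∀ X Y Z W : Fin q → ℝ,
      ip (R (w2 X Y)) (w2 Z W)
        = 2 * dotP (h X) Y * dotP (h Z) W - dotP (h Y) Z * dotP (h X) W
            - dotP (h Z) X * dotP (h Y) W)
    (hskew : ∀ a c, dotP (h (eB a)) (eB c) = -dotP (h (eB c)) (eB a))
    {x y : Fin q × Fin q} (hx : x ∈ ltPairs q) (hy : y ∈ ltPairs q) :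
    ip (R (bF {x.1, x.2})) (bF {y.1, y.2}) =
      2 * dotP (h (eB x.1)) (eB x.2) * dotP (h (eB y.1)) (eB y.2) + minor2 h x y := by
  rw [bF_pair_eq_w2 (mem_ltPairs.1 hx), bF_pair_eq_w2 (mem_ltPairs.1 hy), hRf, minor2,
    hskew y.1 x.1]
  ring

lemma Bform_self_eq {R : Ext q →ₗ[ℝ] Ext q}
    (hRf : ∀ X Y Z W : Fin q → ℝ,
      ip (R (w2 X Y)) (w2 Z W)
        = 2 * dotP (h X) Y * dotP (h Z) W - dotP (h Y) Z * dotP (h X) W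
            - dotP (h Z) X * dotP (h Y) W)
    (hskew : ∀ a c, dotP (h (eB a)) (eB c) = -dotP (h (eB c)) (eB a)) (ω : Ext q) :
    Bform R ω ω = 1 / 4 * (2 * ∑ x ∈ ltPairs q, ∑ y ∈ ltPairs q,
        dotP (h (eB x.1)) (eB x.2) * dotP (h (eB y.1)) (eB y.2) *
          ip (brkt (bF {x.1, x.2}) ω) (brkt (bF {y.1, y.2}) ω) +
      ∑ x ∈ ltPairs q, ∑ y ∈ ltPairs q,
        minor2 h x y * ip (brkt (bF {x.1, x.2}) ω) (brkt (bF {y.1, y.2}) ω)) := by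
  simp_rw [Bform, sum_twoSets_eq_sum_ltPairs]
  congr 1
  rw [mul_sum, ← sum_add_distrib]
  refine sum_congr rfl fun x hx => ?_
  rw [mul_sum, ← sum_add_distrib]
  refine sum_congr rfl fun y hy => ?_
  rw [ip_apply_bF_pair hRf hskew hx hy]
  ring

variable {b : Fin (q / 2) → ℝ}

lemma dotP_eB_of_canonical (hh : ∀ a, h (eB a) = partnerCoeff b a • eB (partner a)) (a c : Fin q) :
    dotP (h (eB a)) (eB c) = if c = partner a then partnerCoeff b a else 0 := by
  rw [hh]
  by_cases hc : c = partner a <;> simp [dotP, eB, Pi.single_apply, hc]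

lemma dotP_eB_antisymm_of_canonical (hh : ∀ a, h (eB a) = partnerCoeff b a • eB (partner a))
    (a c : Fin q) :
    dotP (h (eB a)) (eB c) = -dotP (h (eB c)) (eB a) := by
  rw [dotP_eB_of_canonical hh, dotP_eB_of_canonical hh]
  by_cases hc : c = partner a
  · rw [if_pos hc, if_pos (by rw [hc, partner_partner]), hc, partnerCoeff_partner, neg_neg]
  · rw [if_neg hc, if_neg (fun h => hc (by rw [h, partner_partner])), neg_zero]

def pairPartner (x : Fin q × Fin q) : Fin q × Fin q :=
  if partner x.1 < partner x.2 then (partner x.1, partner x.2) else (partner x.2, partner x.1)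

lemma pairPartner_mem {x : Fin q × Fin q} (hx : x ∈ ltPairs q) : pairPartner x ∈ ltPairs q := by
  have hne : partner x.1 ≠ partner x.2 := partner_injective.ne (mem_ltPairs.1 hx).ne
  rw [pairPartner]
  split_ifs with hlt
  · exact mem_ltPairs.2 hlt
  · exact mem_ltPairs.2 (lt_of_le_of_ne (not_lt.1 hlt) hne.symm)

lemma pairPartner_pairPartner {x : Fin q × Fin q} (hx : x ∈ ltPairs q) :
    pairPartner (pairPartner x) = x := by
  have hx' := mem_ltPairs.1 hx
  unfold pairPartner
  split_ifs <;> simp_all [partner_partner, not_lt.2 hx'.le]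

lemma minor2_eq_zero_of_canonical (hh : ∀ a, h (eB a) = partnerCoeff b a • eB (partner a))
    {x y : Fin q × Fin q} (hy : y ∈ ltPairs q) (hne : y ≠ pairPartner x) : minor2 h x y = 0 := by
  have hy' := mem_ltPairs.1 hy
  have h₁ : ¬(y.1 = partner x.1 ∧ y.2 = partner x.2) := by
    rintro ⟨h₁, h₂⟩
    exact hne (by rw [pairPartner, if_pos (h₁ ▸ h₂ ▸ hy'), ← h₁, ← h₂])
  have h₂ : ¬(y.1 = partner x.2 ∧ y.2 = partner x.1) := by
    rintro ⟨h₁, h₂⟩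
    exact hne (by rw [pairPartner, if_neg (h₁ ▸ h₂ ▸ not_lt.2 hy'.le), ← h₁, ← h₂])
  simp only [minor2, dotP_eB_of_canonical hh]
  split_ifs <;> simp_all

lemma abs_minor2_le_of_canonical (hh : ∀ a, h (eB a) = partnerCoeff b a • eB (partner a))
    {M : ℝ} (hM : ∀ k, |b k| ≤ M) (hM0 : 0 ≤ M) {x : Fin q × Fin q} (hx : x ∈ ltPairs q)
    (y : Fin q × Fin q) : |minor2 h x y| ≤ M ^ 2 := by
  have hentry : ∀ a c, |dotP (h (eB a)) (eB c)| ≤ M := fun a c => by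
    rw [dotP_eB_of_canonical hh]
    split_ifs
    exacts [abs_partnerCoeff_le hM hM0 a, by rwa [abs_zero]]
  have hprod : ∀ a c a' c', |dotP (h (eB a)) (eB c) * dotP (h (eB a')) (eB c')| ≤ M ^ 2 :=
    fun a c a' c' => by
      rw [abs_mul, sq]
      exact mul_le_mul (hentry a c) (hentry a' c') (abs_nonneg _) hM0
  -- `y.1` is the partner of at most one of `x.1 ≠ x.2`, so one product in the minor vanishes.
  have hzero : dotP (h (eB x.1)) (eB y.1) = 0 ∨ dotP (h (eB x.2)) (eB y.1) = 0 := by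
    simp only [dotP_eB_of_canonical hh, ite_eq_right_iff]
    by_contra! hc
    exact (mem_ltPairs.1 hx).ne (partner_injective (hc.1.1.symm.trans hc.2.1))
  rcases hzero with h0 | h0
  · simpa [minor2, h0] using hprod x.1 y.2 x.2 y.1
  · simpa [minor2, h0] using hprod x.1 y.1 x.2 y.2

end Curvature

/-- Theorem 4.1 of the paper, pointwise algebraic content. For the
O'Neill tensor `h` in canonical form on `V = ℝ^q` (`m = ⌊q/2⌋`; if `q` is odd there is an
extra basis vector — here the last one — annihilated by `h`), for every `1 ≤ p ≤ q−1` and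
every `p`-form `ω`, `⟨B_{R_ext}^{[p]} ω, ω⟩ ≥ −p(q−p) b_m² |ω|²`.
(Indices are shifted: paper's `e_k` is `eB ⟨k-1, _⟩`.) -/
theorem statement_9 (q : ℕ) (hq : 2 ≤ q)
    (h : (Fin q → ℝ) →ₗ[ℝ] (Fin q → ℝ)) (b : Fin (q / 2) → ℝ)
    (hcan : ∀ k : Fin (q / 2),
      h (eB ⟨2 * (k : ℕ), by have := k.isLt; omega⟩)
          = b k • eB ⟨2 * (k : ℕ) + 1, by have := k.isLt; omega⟩ ∧
        h (eB ⟨2 * (k : ℕ) + 1, by have := k.isLt; omega⟩)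
          = (-(b k)) • eB ⟨2 * (k : ℕ), by have := k.isLt; omega⟩)
    (hodd : q % 2 = 1 → h (eB ⟨q - 1, by omega⟩) = 0)
    (hord : ∀ k l : Fin (q / 2), k ≤ l → |b k| ≤ |b l|)
    (Rext : Ext q →ₗ[ℝ] Ext q)
    (hRf : ∀ X Y Z W : Fin q → ℝ,
      ip (Rext (w2 X Y)) (w2 Z W)
        = 2 * dotP (h X) Y * dotP (h Z) W - dotP (h Y) Z * dotP (h X) W
            - dotP (h Z) X * dotP (h Y) W)
    (p : ℕ)
    (ω : Ext q) (hω : homog p ω) :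
    -((p : ℝ) * ((q : ℝ) - (p : ℝ)) * b ⟨q / 2 - 1, by omega⟩ ^ 2 * ip ω ω)
      ≤ Bform Rext ω ω := by
  have hh := eq_partnerCoeff_smul_of_canonical (by omega) (fun k hk => hcan ⟨k, by omega⟩) hodd
  set M := |b ⟨q / 2 - 1, by omega⟩|
  have hM : ∀ k, |b k| ≤ M := fun k => hord _ _ (Fin.mk_le_mk.2 (by omega))
  set u := fun x : Fin q × Fin q => brkt (bF {x.1, x.2}) ω
  have hsquares := sum_sum_mul_mul_ip_nonneg (ltPairs q) u fun x => dotP (h (eB x.1)) (eB x.2)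
  have hminor := neg_mul_sum_ip_le_of_involution (ltPairs q) u pairPartner
    (fun _ => pairPartner_mem) (fun _ => pairPartner_pairPartner) (minor2 h) (M ^ 2)
    (fun _ _ _ hy hne => minor2_eq_zero_of_canonical hh hy hne)
    (fun _ hx => abs_minor2_le_of_canonical hh hM (abs_nonneg _) hx _)
  have hdiag : ∑ x ∈ ltPairs q, ip (u x) (u x) ≤ 4 * ((p : ℝ) * ((q : ℝ) - p)) * ip ω ω := by
    rw [← sum_twoSets_eq_sum_ltPairs fun r => ip (brkt (bF r) ω) (brkt (bF r) ω)]
    exact sum_twoSets_ip_brkt_le hω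
  rw [Bform_self_eq hRf (dotP_eB_antisymm_of_canonical hh), ← sq_abs]
  linarith [mul_le_mul_of_nonneg_left hdiag (sq_nonneg M)]

end
end Paper
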